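/- arXiv:2311.13122 — 3 statements merged into one kernel-verified Lean document; each statement's English description precedes it below -/
import Mathlib

section
/- Let K be a compact convex subset of a real Banach space, with the induced metric, let D be a positive integer, and let (E_i)_{i ∈ I}, ι_{ji}, E, ι_i be a filtered colimit presentation of real Banach spaces. Then: (i) for every i and all affine nonexpansive maps f, g : K → E_i, sup_{p ∈ K} ‖ι_i(f(p)) − ι_i(g(p))‖ = inf_{j ≥ i} sup_{p ∈ K} ‖ι_{ji}(f(p)) − ι_{ji}(g(p))‖; and (ii) for every affine nonexpansive map φ : K → E whose image spans a linear subspace of dimension at most D, and every ε > 0, there exist i ∈ I and an affine nonexpansive map ψ : K → E_i whose image spans a subspace of dimension at most D, with sup_{p ∈ K} ‖φ(p) − ι_i(ψ(p))‖ ≤ ε. -/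
set_option maxHeartbeats 1000000
set_option synthInstance.maxHeartbeats 400000

open Metric


/-- A map defined on a subset `K` of a real normed space is affine on `K` if it
preserves convex combinations of points of `K` (whenever those combinations again
lie in `K`, which is automatic for convex `K`). -/
def IsAffineOn {V E : Type*} [NormedAddCommGroup V] [NormedSpace ℝ V]
    [NormedAddCommGroup E] [NormedSpace ℝ E] (K : Set V) (f : K → E) : Prop :=
  ∀ (x y : K) (t : ℝ), 0 ≤ t → t ≤ 1 →
    ∀ h : t • (x : V) + (1 - t) • (y : V) ∈ K,
      f ⟨t • (x : V) + (1 - t) • (y : V), h⟩ = t • f x + (1 - t) • f y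

lemma dini_step {I : Type*} [Preorder I] [IsDirected I (· ≤ ·)] [Nonempty I]
    {E : I → Type*} [∀ i, NormedAddCommGroup (E i)] [∀ i, NormedSpace ℝ (E i)]
    {W : Type*} [NormedAddCommGroup W] [NormedSpace ℝ W]
    (ι : ∀ i j, i ≤ j → (E i →L[ℝ] E j))
    (ιc : ∀ i, E i →L[ℝ] W)
    (hι1 : ∀ i j (h : i ≤ j) (x : E i), ‖ι i j h x‖ ≤ ‖x‖)
    (htrans : ∀ i j k (hij : i ≤ j) (hjk : j ≤ k) (x : E i),
      ι j k hjk (ι i j hij x) = ι i k (hij.trans hjk) x)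
    (hnorm : ∀ i (x : E i), ‖ιc i x‖ = ⨅ j : {j // i ≤ j}, ‖ι i j.1 j.2 x‖)
    {X : Type*} [MetricSpace X] [CompactSpace X]
    (i : I) (u : X → E i) (M : ℝ) (hM : 0 ≤ M)
    (hu : ∀ x y : X, ‖u x - u y‖ ≤ M * dist x y)
    (s ε : ℝ) (hε : 0 < ε) (hs : ∀ x, ‖ιc i (u x)‖ ≤ s) :
    ∃ j, ∃ h : i ≤ j, ∀ x, ‖ι i j h (u x)‖ ≤ s + ε := by
  classical
  set r : ℝ := ε / (2 * (M + 1)) with hr_def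
  have hr : 0 < r := by positivity
  -- finite subcover
  obtain ⟨t, ht⟩ := isCompact_univ.elim_finite_subcover (fun x : X => ball x r)
    (fun _ => isOpen_ball) (fun x _ => Set.mem_iUnion.2 ⟨x, mem_ball_self hr⟩)
  haveI : Nonempty {j // i ≤ j} := ⟨⟨i, le_rfl⟩⟩
  have hex : ∀ x : X, ∃ j : {j // i ≤ j}, ‖ι i j.1 j.2 (u x)‖ < s + ε / 2 := by
    intro x
    apply exists_lt_of_ciInf_lt
    rw [← hnorm]
    linarith [hs x]
  choose jf hjf using hex
  obtain ⟨j, hj⟩ := Finset.exists_le (insert i (t.image (fun x => (jf x).1)))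
  have hij : i ≤ j := hj i (Finset.mem_insert_self _ _)
  refine ⟨j, hij, fun x => ?_⟩
  obtain ⟨y, hyt, hxy⟩ : ∃ y ∈ t, x ∈ ball y r := by
    have := ht (Set.mem_univ x)
    simpa using this
  have hjy : (jf y).1 ≤ j := hj _ (Finset.mem_insert_of_mem
    (Finset.mem_image_of_mem _ hyt))
  have h1 : ‖ι i j hij (u y)‖ ≤ ‖ι i (jf y).1 (jf y).2 (u y)‖ := by
    have := htrans i (jf y).1 j (jf y).2 hjy (u y)
    calc ‖ι i j hij (u y)‖ = ‖ι (jf y).1 j hjy (ι i (jf y).1 (jf y).2 (u y))‖ := by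
          rw [this]
      _ ≤ _ := hι1 _ _ _ _
  have h2 : ‖ι i j hij (u x) - ι i j hij (u y)‖ ≤ M * r := by
    rw [← map_sub]
    calc ‖ι i j hij (u x - u y)‖ ≤ ‖u x - u y‖ := hι1 _ _ _ _
      _ ≤ M * dist x y := hu x y
      _ ≤ M * r := by
          exact mul_le_mul_of_nonneg_left (le_of_lt (mem_ball.mp hxy)) hM
  have hMr : M * r ≤ ε / 2 := by
    rw [hr_def]
    have hM1 : (0:ℝ) < M + 1 := by linarith
    have heq : (M + 1) * (ε / (2 * (M + 1))) = ε / 2 := by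
      field_simp
    calc M * (ε / (2 * (M + 1))) ≤ (M + 1) * (ε / (2 * (M + 1))) := by
          apply mul_le_mul_of_nonneg_right (by linarith)
          positivity
      _ = ε / 2 := heq
  calc ‖ι i j hij (u x)‖ ≤ ‖ι i j hij (u y)‖ + ‖ι i j hij (u x) - ι i j hij (u y)‖ := by
        have := norm_sub_norm_le (ι i j hij (u x)) (ι i j hij (u y))
        linarith [abs_le.mp (abs_norm_sub_norm_le (ι i j hij (u x)) (ι i j hij (u y)))]
    _ ≤ (s + ε / 2) + ε / 2 := by
        have := hjf y
        have := le_of_lt this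
        linarith [h1, h2, hMr]
    _ = s + ε := by ring

/-- For a compact convex subset `K` of a real Banach space (with the
induced metric) and a positive integer `D`, the functor of affine nonexpansive maps
with image spanning at most `D` dimensions, from Banach spaces with linear
contractions to complete metric spaces (supremum distance), preserves filtered
colimits: (i) the canonical comparison map is isometric on affine nonexpansive maps,
and (ii) every affine nonexpansive `φ : K → E` whose image spans a subspace of
dimension at most `D` is uniformly approximated by such maps into the
stages `E i`. -/
theorem stmt15
    {V : Type*} [NormedAddCommGroup V] [NormedSpace ℝ V] [CompleteSpace V]
    (K : Set V) (hKcpt : IsCompact K) (hKcvx : Convex ℝ K)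
    (D : ℕ) (hD : 0 < D)
    {I : Type*} [Preorder I] [IsDirected I (· ≤ ·)] [Nonempty I]
    {E : I → Type*} [∀ i, NormedAddCommGroup (E i)] [∀ i, NormedSpace ℝ (E i)]
    [∀ i, CompleteSpace (E i)]
    {W : Type*} [NormedAddCommGroup W] [NormedSpace ℝ W] [CompleteSpace W]
    (ι : ∀ i j, i ≤ j → (E i →L[ℝ] E j))
    (ιc : ∀ i, E i →L[ℝ] W)
    (hι1 : ∀ i j (h : i ≤ j) (x : E i), ‖ι i j h x‖ ≤ ‖x‖)
    (hιc1 : ∀ i (x : E i), ‖ιc i x‖ ≤ ‖x‖)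
    (hcomp : ∀ i j (h : i ≤ j) (x : E i), ιc j (ι i j h x) = ιc i x)
    (htrans : ∀ i j k (hij : i ≤ j) (hjk : j ≤ k) (x : E i),
      ι j k hjk (ι i j hij x) = ι i k (hij.trans hjk) x)
    (hid : ∀ i (x : E i), ι i i le_rfl x = x)
    (hdense : Dense (⋃ i, Set.range (ιc i)))
    (hnorm : ∀ i (x : E i), ‖ιc i x‖ = ⨅ j : {j // i ≤ j}, ‖ι i j.1 j.2 x‖) :
    (∀ i (f g : K → E i),
      IsAffineOn K f → (∀ p q : K, ‖f p - f q‖ ≤ ‖(p : V) - (q : V)‖) →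
      IsAffineOn K g → (∀ p q : K, ‖g p - g q‖ ≤ ‖(p : V) - (q : V)‖) →
      (⨆ p : K, ‖ιc i (f p) - ιc i (g p)‖)
        = ⨅ j : {j // i ≤ j}, ⨆ p : K, ‖ι i j.1 j.2 (f p) - ι i j.1 j.2 (g p)‖)
    ∧
    (∀ (φ : K → W),
      IsAffineOn K φ → (∀ p q : K, ‖φ p - φ q‖ ≤ ‖(p : V) - (q : V)‖) →
      Module.rank ℝ (Submodule.span ℝ (Set.range φ)) ≤ (D : Cardinal) →
      ∀ ε > 0,
      ∃ (i : I) (ψ : K → E i),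
        IsAffineOn K ψ ∧ (∀ p q : K, ‖ψ p - ψ q‖ ≤ ‖(p : V) - (q : V)‖) ∧
        Module.rank ℝ (Submodule.span ℝ (Set.range ψ)) ≤ (D : Cardinal) ∧
        (⨆ p : K, ‖φ p - ιc i (ψ p)‖) ≤ ε) := by
  classical
  constructor
  · intro i f g _ hflip _ hglip
    haveI : Nonempty {j // i ≤ j} := ⟨⟨i, le_rfl⟩⟩
    -- rewrite as norms of differences
    have e1 : ∀ p : K, ιc i (f p) - ιc i (g p) = ιc i (f p - g p) := fun p => (map_sub _ _ _).symm
    have e2 : ∀ (j : {j // i ≤ j}) (p : K),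
        ι i j.1 j.2 (f p) - ι i j.1 j.2 (g p) = ι i j.1 j.2 (f p - g p) :=
      fun j p => (map_sub _ _ _).symm
    simp only [e1, e2]
    rcases isEmpty_or_nonempty K with hK | hK
    · haveI := hK
      simp only [Real.iSup_of_isEmpty, ciInf_const]
    · haveI := hK
      obtain ⟨p₀⟩ := hK
      -- uniform bound
      obtain ⟨C, hC⟩ := Metric.isBounded_iff.mp hKcpt.isBounded
      set u : K → E i := fun p => f p - g p with hu_def
      have hulip : ∀ p q : K, ‖u p - u q‖ ≤ 2 * dist p q := by
        intro p q
        have h1 : u p - u q = (f p - f q) - (g p - g q) := by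
          simp only [hu_def]; abel
        rw [h1]
        have := norm_sub_le (f p - f q) (g p - g q)
        have hd : dist p q = ‖(p:V) - (q:V)‖ := by
          rw [Subtype.dist_eq, dist_eq_norm]
        rw [hd]
        linarith [hflip p q, hglip p q]
      have hB : ∀ p : K, ‖u p‖ ≤ ‖u p₀‖ + 2 * C := by
        intro p
        have h1 := hulip p p₀
        have h2 : dist p p₀ ≤ C := by
          rw [Subtype.dist_eq]
          exact hC p.2 p₀.2
        have := norm_sub_norm_le (u p) (u p₀)
        linarith
      set B := ‖u p₀‖ + 2 * C with hB_def
      have hbddc : ∀ p : K, ‖ιc i (u p)‖ ≤ B := fun p => (hιc1 i (u p)).trans (hB p)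
      have hbddj : ∀ (j : {j // i ≤ j}) (p : K), ‖ι i j.1 j.2 (u p)‖ ≤ B :=
        fun j p => (hι1 i j.1 j.2 (u p)).trans (hB p)
      have hbddAj : ∀ j : {j // i ≤ j}, BddAbove (Set.range fun p : K => ‖ι i j.1 j.2 (u p)‖) :=
        fun j => ⟨B, by rintro _ ⟨p, rfl⟩; exact hbddj j p⟩
      have hbddAc : BddAbove (Set.range fun p : K => ‖ιc i (u p)‖) :=
        ⟨B, by rintro _ ⟨p, rfl⟩; exact hbddc p⟩
      haveI : CompactSpace K := isCompact_iff_compactSpace.mp hKcpt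
      apply le_antisymm
      · apply le_ciInf
        intro j
        apply ciSup_le
        intro p
        have h1 : ‖ιc i (u p)‖ ≤ ‖ι i j.1 j.2 (u p)‖ := by
          rw [← hcomp i j.1 j.2 (u p)]
          exact hιc1 _ _
        exact h1.trans (le_ciSup (hbddAj j) p)
      · apply le_of_forall_pos_le_add
        intro ε hε
        set s := ⨆ p : K, ‖ιc i (u p)‖ with hs_def
        have hsle : ∀ p : K, ‖ιc i (u p)‖ ≤ s := fun p => le_ciSup hbddAc p
        obtain ⟨j, hij, hjle⟩ := dini_step ι ιc hι1 htrans hnorm i u 2 (by norm_num) hulip s ε hε hsle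
        have : (⨆ p : K, ‖ι i j hij (u p)‖) ≤ s + ε := ciSup_le fun p => hjle p
        have hbddB : BddBelow (Set.range fun j : {j // i ≤ j} =>
            ⨆ p : K, ‖ι i j.1 j.2 (u p)‖) := by
          refine ⟨0, ?_⟩
          rintro _ ⟨j', rfl⟩
          exact le_ciSup_of_le (hbddAj j') p₀ (norm_nonneg _)
        exact (ciInf_le hbddB (⟨j, hij⟩ : {j // i ≤ j})).trans this
  · intro φ hφaff hφlip hrank ε hε
    rcases isEmpty_or_nonempty K with hK | hK
    · haveI := hK
      obtain ⟨i⟩ := ‹Nonempty I›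
      refine ⟨i, fun _ => 0, ?_, ?_, ?_, ?_⟩
      · intro x; exact absurd x.2 (by exact fun _ => IsEmpty.false x)
      · intro p; exact absurd p.2 (fun _ => IsEmpty.false p)
      · rw [Set.range_eq_empty, Submodule.span_empty]
        simpa using (by positivity : (0:Cardinal) ≤ D)
      · rw [Real.iSup_of_isEmpty]
        exact le_of_lt hε
    haveI := hK
    obtain ⟨p₀⟩ := hK
    -- the span F is finite dimensional
    set F := Submodule.span ℝ (Set.range φ) with hF_def
    haveI : Module.Free ℝ F := Module.Free.of_divisionRing ℝ F
    haveI : Module.Finite ℝ F := by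
      rw [← Module.rank_lt_aleph0_iff]
      exact lt_of_le_of_lt hrank (Cardinal.nat_lt_aleph0 D)
    haveI : FiniteDimensional ℝ F := ‹Module.Finite ℝ F›
    have hmem : ∀ p : K, φ p ∈ F := fun p => Submodule.subset_span ⟨p, rfl⟩
    -- a bound R ≥ 1 on ‖φ p‖
    haveI : CompactSpace K := isCompact_iff_compactSpace.mp hKcpt
    have hφcont : Continuous φ := by
      apply LipschitzWith.continuous (K := 1)
      intro p q
      rw [edist_dist, edist_dist]
      have h1 : dist (φ p) (φ q) ≤ dist p q := by
        rw [dist_eq_norm, Subtype.dist_eq, dist_eq_norm]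
        exact hφlip p q
      simpa using h1
    obtain ⟨R₀, hR₀⟩ := (isCompact_range hφcont).isBounded.exists_norm_le
    set R : ℝ := max R₀ 1 with hR_def
    have hR1 : (1:ℝ) ≤ R := le_max_right _ _
    have hR0 : (0:ℝ) < R := lt_of_lt_of_le one_pos hR1
    have hRb : ∀ p : K, ‖φ p‖ ≤ R := fun p =>
      le_trans (hR₀ _ (Set.mem_range_self p)) (le_max_left _ _)
    -- basis of F
    set d := Module.finrank ℝ F with hd_def
    set b : Module.Basis (Fin d) ℝ F := Module.finBasis ℝ F with hb_def
    -- coordinate bound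
    set Cb : ℝ := ∑ k : Fin d, ‖LinearMap.toContinuousLinearMap (b.coord k)‖ with hCb_def
    have hCb0 : 0 ≤ Cb := Finset.sum_nonneg fun k _ => ContinuousLinearMap.opNorm_nonneg _
    have hcoord : ∀ (w : F), ∑ k : Fin d, |b.repr w k| ≤ Cb * ‖w‖ := by
      intro w
      rw [hCb_def, Finset.sum_mul]
      apply Finset.sum_le_sum
      intro k _
      have : |b.repr w k| = ‖LinearMap.toContinuousLinearMap (b.coord k) w‖ := by
        simp [Module.Basis.coord_apply, Real.norm_eq_abs]
      rw [this]
      exact (LinearMap.toContinuousLinearMap (b.coord k)).le_opNorm w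
    -- choose δ'
    set δ' : ℝ := ε / (4 * R * (Cb + 1)) with hδ'_def
    have hδ'0 : 0 < δ' := by positivity
    -- approximate the basis vectors
    have hex : ∀ k : Fin d, ∃ (ik : I) (xk : E ik), ‖ιc ik xk - (b k : W)‖ < δ' := by
      intro k
      have hcl : ((b k : W)) ∈ closure (⋃ i, Set.range (ιc i)) := hdense _
      obtain ⟨y, hy, hyd⟩ := Metric.mem_closure_iff.mp hcl δ' hδ'0
      obtain ⟨_, ⟨ik, rfl⟩, xk, rfl⟩ := hy
      exact ⟨ik, xk, by rwa [← dist_eq_norm, dist_comm]⟩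
    choose ik xk hxk using hex
    obtain ⟨i₀, hi₀⟩ := Finset.exists_le (Finset.image ik Finset.univ)
    have hik : ∀ k, ik k ≤ i₀ := fun k => hi₀ _ (Finset.mem_image_of_mem _ (Finset.mem_univ k))
    set x' : Fin d → E i₀ := fun k => ι (ik k) i₀ (hik k) (xk k) with hx'_def
    have hx'c : ∀ k, ‖ιc i₀ (x' k) - (b k : W)‖ < δ' := by
      intro k
      rw [hx'_def]
      simpa [hcomp] using hxk k
    -- the linear map L₀
    set L₀ : F →ₗ[ℝ] E i₀ := b.constr ℝ x' with hL₀_def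
    have hL₀app : ∀ w : F, L₀ w = ∑ k : Fin d, b.repr w k • x' k := by
      intro w
      rw [hL₀_def, Module.Basis.constr_apply_fintype ℝ b x' w]
      simp [Module.Basis.equivFun_apply]
    set η : ℝ := Cb * δ' with hη_def
    have hη0 : 0 ≤ η := mul_nonneg hCb0 (le_of_lt hδ'0)
    -- key approximation estimate
    have hstar : ∀ w : F, ‖ιc i₀ (L₀ w) - (w : W)‖ ≤ η * ‖w‖ := by
      intro w
      have e1 : ιc i₀ (L₀ w) = ∑ k : Fin d, b.repr w k • ιc i₀ (x' k) := by
        rw [hL₀app, map_sum]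
        simp
      have e2 : (w : W) = ∑ k : Fin d, b.repr w k • (b k : W) := by
        have := b.sum_repr w
        calc (w : W) = ((∑ k : Fin d, b.repr w k • b k : F) : W) := by rw [this]
          _ = ∑ k : Fin d, b.repr w k • (b k : W) := by push_cast; rfl
      rw [e1, e2, ← Finset.sum_sub_distrib]
      calc ‖∑ k : Fin d, (b.repr w k • ιc i₀ (x' k) - b.repr w k • (b k : W))‖
          ≤ ∑ k : Fin d, ‖b.repr w k • ιc i₀ (x' k) - b.repr w k • (b k : W)‖ :=
            norm_sum_le _ _
        _ ≤ ∑ k : Fin d, |b.repr w k| * δ' := by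
            apply Finset.sum_le_sum
            intro k _
            rw [← smul_sub, norm_smul, Real.norm_eq_abs]
            exact mul_le_mul_of_nonneg_left (le_of_lt (hx'c k)) (abs_nonneg _)
        _ = (∑ k : Fin d, |b.repr w k|) * δ' := by rw [Finset.sum_mul]
        _ ≤ (Cb * ‖w‖) * δ' := mul_le_mul_of_nonneg_right (hcoord w) (le_of_lt hδ'0)
        _ = η * ‖w‖ := by rw [hη_def]; ring
    have hη_small : η ≤ ε / (4 * R) := by
      rw [hη_def]
      calc Cb * δ' ≤ (Cb + 1) * δ' :=
            mul_le_mul_of_nonneg_right (by linarith) (le_of_lt hδ'0)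
        _ = ε / (4 * R) := by
            rw [hδ'_def]
            field_simp
    -- Dini step on the closed unit ball of F
    haveI : ProperSpace F := FiniteDimensional.proper ℝ F
    haveI : CompactSpace (Metric.closedBall (0:F) 1) :=
      isCompact_iff_compactSpace.mp (isCompact_closedBall _ _)
    set L₀c : F →L[ℝ] E i₀ := LinearMap.toContinuousLinearMap L₀ with hL₀c_def
    set ε₂ : ℝ := ε / (2 * R) with hε₂_def
    have hε₂0 : 0 < ε₂ := by positivity
    have hball : ∃ j, ∃ h : i₀ ≤ j, ∀ x : Metric.closedBall (0:F) 1,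
        ‖ι i₀ j h (L₀ x.1)‖ ≤ (1 + η) + ε₂ := by
      refine dini_step ι ιc hι1 htrans hnorm i₀ (fun x : Metric.closedBall (0:F) 1 => L₀ x.1)
        ‖L₀c‖ (ContinuousLinearMap.opNorm_nonneg _) ?_ (1 + η) ε₂ hε₂0 ?_
      · intro x y
        have : L₀ x.1 - L₀ y.1 = L₀c (x.1 - y.1) := by simp [hL₀c_def, map_sub]
        rw [this, Subtype.dist_eq, dist_eq_norm]
        exact L₀c.le_opNorm _
      · intro x
        have h1 : ‖(x.1 : W)‖ ≤ 1 := by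
          have := mem_closedBall_zero_iff.mp x.2
          simpa using this
        have h2 : ‖ιc i₀ (L₀ x.1) - (x.1 : W)‖ ≤ η * ‖(x.1 : W)‖ := hstar x.1
        have h3 : η * ‖(x.1 : W)‖ ≤ η * 1 := mul_le_mul_of_nonneg_left h1 hη0
        calc ‖ιc i₀ (L₀ x.1)‖ = ‖(x.1 : W) + (ιc i₀ (L₀ x.1) - (x.1 : W))‖ := by
              congr 1
              abel
          _ ≤ ‖(x.1 : W)‖ + ‖ιc i₀ (L₀ x.1) - (x.1 : W)‖ := norm_add_le _ _
          _ ≤ 1 + η := by linarith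
    obtain ⟨j, hij, hj⟩ := hball
    set c : ℝ := 1 + η + ε₂ with hc_def
    have hc1 : (1:ℝ) ≤ c := by rw [hc_def]; linarith
    have hc0 : (0:ℝ) < c := lt_of_lt_of_le one_pos hc1
    -- scale
    have hscale : ∀ w : F, ‖ι i₀ j hij (L₀ w)‖ ≤ c * ‖w‖ := by
      intro w
      rcases eq_or_ne w 0 with rfl | hw
      · simp
      · have hnw : (0:ℝ) < ‖w‖ := norm_pos_iff.mpr hw
        set w' : F := ‖w‖⁻¹ • w with hw'_def
        have hw'mem : w' ∈ Metric.closedBall (0:F) 1 := by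
          rw [mem_closedBall_zero_iff, hw'_def, norm_smul, Real.norm_eq_abs,
            abs_of_pos (inv_pos.mpr hnw)]
          rw [inv_mul_cancel₀ (ne_of_gt hnw)]
        have := hj ⟨w', hw'mem⟩
        have heq : ι i₀ j hij (L₀ w') = ‖w‖⁻¹ • ι i₀ j hij (L₀ w) := by
          rw [hw'_def, map_smul, map_smul]
        rw [heq, norm_smul, Real.norm_eq_abs, abs_of_pos (inv_pos.mpr hnw)] at this
        have h2 : ‖ι i₀ j hij (L₀ w)‖ = ‖w‖ * (‖w‖⁻¹ * ‖ι i₀ j hij (L₀ w)‖) := by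
          rw [← mul_assoc, mul_inv_cancel₀ (ne_of_gt hnw), one_mul]
        rw [h2, hc_def]
        calc ‖w‖ * (‖w‖⁻¹ * ‖ι i₀ j hij (L₀ w)‖) ≤ ‖w‖ * ((1 + η) + ε₂) :=
              mul_le_mul_of_nonneg_left this (le_of_lt hnw)
          _ = (1 + η + ε₂) * ‖w‖ := by ring
    -- the contraction T
    set T : F →ₗ[ℝ] E j := c⁻¹ • ((ι i₀ j hij : E i₀ →L[ℝ] E j).toLinearMap ∘ₗ L₀) with hT_def
    have hTapp : ∀ w : F, T w = c⁻¹ • ι i₀ j hij (L₀ w) := by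
      intro w; rw [hT_def]; rfl
    have hTle : ∀ w : F, ‖T w‖ ≤ ‖w‖ := by
      intro w
      rw [hTapp, norm_smul, Real.norm_eq_abs, abs_of_pos (inv_pos.mpr hc0)]
      calc c⁻¹ * ‖ι i₀ j hij (L₀ w)‖ ≤ c⁻¹ * (c * ‖w‖) :=
            mul_le_mul_of_nonneg_left (hscale w) (le_of_lt (inv_pos.mpr hc0))
        _ = ‖w‖ := by field_simp
    -- approximation property of T
    have hTapprox : ∀ w : F, ‖(w : W) - ιc j (T w)‖ ≤ (2 * η + ε₂) * ‖w‖ := by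
      intro w
      have e1 : ιc j (T w) = c⁻¹ • ιc i₀ (L₀ w) := by
        rw [hTapp, map_smul]
        congr 1
        exact hcomp i₀ j hij (L₀ w)
      have e2 : (w : W) - ιc j (T w) = ((1 - c⁻¹) • (w : W)) + c⁻¹ • ((w : W) - ιc i₀ (L₀ w)) := by
        rw [e1]
        rw [sub_smul, one_smul, smul_sub]
        abel
      have hcinv1 : c⁻¹ ≤ 1 := by
        rw [inv_le_one_iff₀]; right; exact hc1
      have hcinv0 : 0 < c⁻¹ := inv_pos.mpr hc0
      have h1c : 0 ≤ 1 - c⁻¹ := by linarith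
      have h1c2 : 1 - c⁻¹ ≤ c - 1 := by
        have : c - 1 ≥ 1 - c⁻¹ := by
          have h3 : c⁻¹ ≥ 1 - (c - 1) := by
            rw [ge_iff_le, ← sub_nonneg]
            have : c⁻¹ - (1 - (c-1)) = (c-1)^2 / c := by field_simp; ring
            rw [this]
            positivity
          linarith
        linarith
      rw [e2]
      calc ‖((1 - c⁻¹) • (w : W)) + c⁻¹ • ((w : W) - ιc i₀ (L₀ w))‖
          ≤ ‖(1 - c⁻¹) • (w : W)‖ + ‖c⁻¹ • ((w : W) - ιc i₀ (L₀ w))‖ := norm_add_le _ _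
        _ = (1 - c⁻¹) * ‖(w : W)‖ + c⁻¹ * ‖(w : W) - ιc i₀ (L₀ w)‖ := by
            rw [norm_smul, norm_smul, Real.norm_eq_abs, Real.norm_eq_abs,
              abs_of_nonneg h1c, abs_of_pos hcinv0]
        _ ≤ (c - 1) * ‖(w : W)‖ + 1 * (η * ‖w‖) := by
            have hn : ‖(w:W)‖ = ‖w‖ := rfl
            have t1 : (1 - c⁻¹) * ‖(w : W)‖ ≤ (c - 1) * ‖(w : W)‖ :=
              mul_le_mul_of_nonneg_right h1c2 (norm_nonneg _)
            have t2' : ‖(w : W) - ιc i₀ (L₀ w)‖ ≤ η * ‖w‖ := by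
              rw [norm_sub_rev]; exact hstar w
            have t2 : c⁻¹ * ‖(w : W) - ιc i₀ (L₀ w)‖ ≤ 1 * (η * ‖w‖) := by
              rw [one_mul]
              calc c⁻¹ * ‖(w : W) - ιc i₀ (L₀ w)‖ ≤ 1 * ‖(w : W) - ιc i₀ (L₀ w)‖ :=
                    mul_le_mul_of_nonneg_right hcinv1 (norm_nonneg _)
                _ = ‖(w : W) - ιc i₀ (L₀ w)‖ := one_mul _
                _ ≤ η * ‖w‖ := t2'
            linarith
        _ = (2 * η + ε₂) * ‖w‖ := by
            have hn : ‖(w:W)‖ = ‖w‖ := rfl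
            rw [hn, hc_def]; ring
    -- define ψ
    set ψ : K → E j := fun p => T ⟨φ p, hmem p⟩ with hψ_def
    refine ⟨j, ψ, ?_, ?_, ?_, ?_⟩
    · -- affine
      intro x y t ht0 ht1 h
      have h1 : (⟨φ ⟨t • (x:V) + (1-t) • (y:V), h⟩, hmem _⟩ : F)
          = t • (⟨φ x, hmem x⟩ : F) + (1 - t) • (⟨φ y, hmem y⟩ : F) := by
        apply Subtype.ext
        simpa using hφaff x y t ht0 ht1 h
      show T _ = t • T _ + (1 - t) • T _
      rw [h1, map_add, map_smul, map_smul]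
    · -- nonexpansive
      intro p q
      have h1 : ψ p - ψ q = T (⟨φ p, hmem p⟩ - ⟨φ q, hmem q⟩) := by
        rw [hψ_def, map_sub]
      rw [h1]
      calc ‖T (⟨φ p, hmem p⟩ - ⟨φ q, hmem q⟩)‖ ≤ ‖(⟨φ p, hmem p⟩ - ⟨φ q, hmem q⟩ : F)‖ :=
            hTle _
        _ = ‖φ p - φ q‖ := rfl
        _ ≤ ‖(p : V) - (q : V)‖ := hφlip p q
    · -- rank
      have hsub : Submodule.span ℝ (Set.range ψ) ≤ LinearMap.range T := by
        rw [Submodule.span_le]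
        rintro _ ⟨p, rfl⟩
        exact ⟨⟨φ p, hmem p⟩, rfl⟩
      have hdD : d ≤ D := by
        have h1 : ((d : ℕ) : Cardinal) = Module.rank ℝ F := Module.finrank_eq_rank ℝ F
        rw [← h1] at hrank
        exact_mod_cast hrank
      haveI : Module.Finite ℝ (LinearMap.range T) := Module.Finite.range T
      calc Module.rank ℝ (Submodule.span ℝ (Set.range ψ))
          ≤ Module.rank ℝ (LinearMap.range T) := Submodule.rank_mono hsub
        _ = ((Module.finrank ℝ (LinearMap.range T) : ℕ) : Cardinal) :=
            (Module.finrank_eq_rank ℝ _).symm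
        _ ≤ (D : Cardinal) := by
            exact_mod_cast (le_trans (LinearMap.finrank_range_le T) hdD)
    · -- approximation
      apply ciSup_le
      intro p
      have h1 : ‖φ p - ιc j (ψ p)‖ ≤ (2 * η + ε₂) * ‖φ p‖ := by
        have := hTapprox ⟨φ p, hmem p⟩
        exact this
      calc ‖φ p - ιc j (ψ p)‖ ≤ (2 * η + ε₂) * ‖φ p‖ := h1
        _ ≤ (2 * η + ε₂) * R := by
            apply mul_le_mul_of_nonneg_left (hRb p)
            have := hη0; have := le_of_lt hε₂0; linarith
        _ ≤ ε := by
            have h2 : 2 * η ≤ ε / (2 * R) := by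
              have := hη_small
              have h3 : ε / (4 * R) * 2 = ε / (2 * R) := by field_simp; ring
              linarith [mul_le_mul_of_nonneg_right hη_small (by norm_num : (0:ℝ) ≤ 2)]
            have h4 : (2 * η + ε₂) * R ≤ (ε / (2*R) + ε / (2*R)) * R := by
              apply mul_le_mul_of_nonneg_right _ (le_of_lt hR0)
              rw [hε₂_def]
              linarith
            have h5 : (ε / (2*R) + ε / (2*R)) * R = ε := by field_simp; ring
            linarith
end

section
/- Let K be a compact, convex, balanced subset of a Banach space (balanced meaning ax ∈ K whenever x ∈ K and |a| ≤ 1 for scalars a), with the induced metric, let D be a positive integer, and let (E_i)_{i ∈ I}, ι_{ji}, E, ι_i be a filtered colimit presentation of Banach spaces over the same scalar field. Call a map f from K to a Banach space absolutely affine if f(a₀x₀ + a₁x₁) = a₀f(x₀) + a₁f(x₁) for all x₀, x₁ ∈ K and all scalars a₀, a₁ with |a₀| + |a₁| ≤ 1. Then: (i) for every i and all absolutely affine nonexpansive maps f, g : K → E_i, sup_{p ∈ K} ‖ι_i(f(p)) − ι_i(g(p))‖ = inf_{j ≥ i} sup_{p ∈ K} ‖ι_{ji}(f(p)) − ι_{ji}(g(p))‖;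 and (ii) for every absolutely affine nonexpansive map φ : K → E whose image spans a linear subspace of dimension at most D, and every ε > 0, there exist i ∈ I and an absolutely affine nonexpansive map ψ : K → E_i whose image spans a subspace of dimension at most D, with sup_{p ∈ K} ‖φ(p) − ι_i(ψ(p))‖ ≤ ε. -/
set_option maxHeartbeats 1000000


/-- A subset `K` of a normed space over `𝕜` (= ℝ or ℂ) is absolutely convex
(equivalently: convex and balanced) if `a₀ • x₀ + a₁ • x₁ ∈ K` whenever
`x₀, x₁ ∈ K` and `|a₀| + |a₁| ≤ 1`. -/
def IsAbsolutelyConvex (𝕜 : Type*) {V : Type*} [RCLike 𝕜] [NormedAddCommGroup V]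
    [NormedSpace 𝕜 V] (K : Set V) : Prop :=
  ∀ (a b : 𝕜) (x y : V), x ∈ K → y ∈ K → ‖a‖ + ‖b‖ ≤ 1 → a • x + b • y ∈ K

/-- A map defined on a subset `K` of a normed space over `𝕜` is absolutely affine
on `K` if `f (a₀ • x₀ + a₁ • x₁) = a₀ • f x₀ + a₁ • f x₁` for all `x₀, x₁ ∈ K` and
scalars with `|a₀| + |a₁| ≤ 1`. -/
def IsAbsAffineOn (𝕜 : Type*) {V E : Type*} [RCLike 𝕜] [NormedAddCommGroup V]
    [NormedSpace 𝕜 V] [NormedAddCommGroup E] [NormedSpace 𝕜 E]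
    (K : Set V) (f : K → E) : Prop :=
  ∀ (a b : 𝕜) (x y : K), ‖a‖ + ‖b‖ ≤ 1 →
    ∀ h : a • (x : V) + b • (y : V) ∈ K,
      f ⟨a • (x : V) + b • (y : V), h⟩ = a • f x + b • f y


section
variable {J : Type*} [Preorder J] [IsDirected J (· ≤ ·)] [Nonempty J]
  {X : Type*} [TopologicalSpace X] [CompactSpace X] [Nonempty X]

lemma dini_swap (h : J → X → ℝ) (hcont : ∀ j, Continuous (h j))
    (hanti : ∀ j k, j ≤ k → ∀ x, h k x ≤ h j x)
    (hnn : ∀ j x, 0 ≤ h j x) :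
    (⨅ j, ⨆ x, h j x) = ⨆ x, ⨅ j, h j x := by
  have hbddA : ∀ j, BddAbove (Set.range (h j)) := fun j =>
    (isCompact_range (hcont j)).bddAbove
  have hbddB : ∀ x, BddBelow (Set.range fun j => h j x) := fun x =>
    ⟨0, by rintro _ ⟨j, rfl⟩; exact hnn j x⟩
  inhabit J
  have hbddI : BddAbove (Set.range fun x => ⨅ j, h j x) := by
    refine ⟨⨆ x, h default x, ?_⟩
    rintro _ ⟨x, rfl⟩
    exact (ciInf_le (hbddB x) default).trans (le_ciSup (hbddA default) x)
  refine le_antisymm ?_ (le_ciInf fun j => ciSup_mono (hbddA j) fun x => ciInf_le (hbddB x) j)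
  by_contra hlt
  push_neg at hlt
  set c := ⨆ x, ⨅ j, h j x with hc
  set L := ⨅ j, ⨆ x, h j x with hL
  have hm : c < (c + L) / 2 ∧ (c + L) / 2 < L := ⟨by linarith, by linarith⟩
  set m := (c + L) / 2
  set A : J → Set X := fun j => {x | m ≤ h j x} with hA
  have hAne : ∀ j, (A j).Nonempty := by
    intro j
    have : m < ⨆ x, h j x := lt_of_lt_of_le hm.2 (ciInf_le ⟨0, by
      rintro _ ⟨j', rfl⟩
      exact le_ciSup_of_le (hbddA j') (Classical.arbitrary X) (hnn j' _)⟩ j)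
    obtain ⟨x, hx⟩ := exists_lt_of_lt_ciSup this
    exact ⟨x, hx.le⟩
  have hAcl : ∀ j, IsClosed (A j) := fun j => isClosed_le continuous_const (hcont j)
  have hAdir : Directed (· ⊇ ·) A := by
    intro j k
    obtain ⟨l, hjl, hkl⟩ := directed_of (· ≤ ·) j k
    exact ⟨l, fun x hx => le_trans hx (hanti j l hjl x),
      fun x hx => le_trans hx (hanti k l hkl x)⟩
  obtain ⟨x, hx⟩ := IsCompact.nonempty_iInter_of_directed_nonempty_isCompact_isClosed A hAdir
    hAne (fun j => (hAcl j).isCompact) hAcl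
  simp only [Set.mem_iInter, Set.mem_setOf_eq] at hx
  have h1 : m ≤ ⨅ j, h j x := le_ciInf fun j => hx j
  have h2 : (⨅ j, h j x) ≤ c := le_ciSup hbddI x
  linarith [hm.1]
end

lemma arith_bound {δ C M : ℝ} (hδ0 : 0 < δ) (hδ1 : δ ≤ 1) (hC0 : 0 ≤ C) (hM0 : 0 ≤ M) :
    δ * C * M + (δ * C + δ) * ((1 + δ * C) * M) ≤ δ * ((C + 1) * (C + 2) * (M + 1)) := by
  nlinarith [mul_nonneg (mul_nonneg hδ0.le (sub_nonneg.mpr hδ1))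
      (mul_nonneg (mul_nonneg hC0 hC0) hM0),
    mul_nonneg (mul_nonneg hδ0.le (sub_nonneg.mpr hδ1)) (mul_nonneg hC0 hM0),
    mul_nonneg hδ0.le hM0, mul_nonneg hδ0.le hC0,
    mul_nonneg hδ0.le (mul_nonneg hC0 hC0), mul_nonneg hδ0.le (mul_nonneg hC0 hM0)]


theorem aux_part1
    {𝕜 : Type*} [RCLike 𝕜]
    {V : Type*} [NormedAddCommGroup V] [NormedSpace 𝕜 V] [CompleteSpace V]
    (K : Set V) (hKcpt : IsCompact K)
    {I : Type*} [Preorder I] [IsDirected I (· ≤ ·)] [Nonempty I]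
    {E : I → Type*} [∀ i, NormedAddCommGroup (E i)] [∀ i, NormedSpace 𝕜 (E i)]
    {W : Type*} [NormedAddCommGroup W] [NormedSpace 𝕜 W]
    (ι : ∀ i j, i ≤ j → (E i →L[𝕜] E j))
    (ιc : ∀ i, E i →L[𝕜] W)
    (hι1 : ∀ i j (h : i ≤ j) (x : E i), ‖ι i j h x‖ ≤ ‖x‖)
    (htrans : ∀ i j k (hij : i ≤ j) (hjk : j ≤ k) (x : E i),
      ι j k hjk (ι i j hij x) = ι i k (hij.trans hjk) x)
    (hnorm : ∀ i (x : E i), ‖ιc i x‖ = ⨅ j : {j // i ≤ j}, ‖ι i j.1 j.2 x‖) :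
    (∀ i (f g : K → E i),
      (∀ p q : K, ‖f p - f q‖ ≤ ‖(p : V) - (q : V)‖) →
      (∀ p q : K, ‖g p - g q‖ ≤ ‖(p : V) - (q : V)‖) →
      (⨆ p : K, ‖ιc i (f p) - ιc i (g p)‖)
        = ⨅ j : {j // i ≤ j}, ⨆ p : K, ‖ι i j.1 j.2 (f p) - ι i j.1 j.2 (g p)‖) := by
  intro i f g hf1 hg1
  haveI : Nonempty {j // i ≤ j} := ⟨⟨i, le_rfl⟩⟩
  haveI : IsDirected {j // i ≤ j} (· ≤ ·) := ⟨fun a b => by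
    obtain ⟨l, h1, h2⟩ := directed_of (· ≤ ·) a.1 b.1
    exact ⟨⟨l, a.2.trans h1⟩, h1, h2⟩⟩
  simp only [← map_sub]
  rcases isEmpty_or_nonempty K with hK | hK
  · rw [Real.iSup_of_isEmpty]
    simp [Real.iSup_of_isEmpty]
  · haveI : CompactSpace K := isCompact_iff_compactSpace.mp hKcpt
    have hfc : Continuous (fun p : K => f p - g p) := by
      have lf : LipschitzWith 1 f := LipschitzWith.of_dist_le_mul (fun p q => by
        rw [dist_eq_norm, Subtype.dist_eq, dist_eq_norm]; simpa using hf1 p q)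
      have lg : LipschitzWith 1 g := LipschitzWith.of_dist_le_mul (fun p q => by
        rw [dist_eq_norm, Subtype.dist_eq, dist_eq_norm]; simpa using hg1 p q)
      exact lf.continuous.sub lg.continuous
    have key := dini_swap (X := K) (J := {j // i ≤ j})
      (fun j p => ‖ι i j.1 j.2 (f p - g p)‖)
      (fun j => ((ι i j.1 j.2).continuous.comp hfc).norm)
      (fun j k hjk p => by
        show ‖ι i k.1 k.2 (f p - g p)‖ ≤ ‖ι i j.1 j.2 (f p - g p)‖
        have heq : ι i k.1 k.2 (f p - g p)
            = ι j.1 k.1 hjk (ι i j.1 j.2 (f p - g p)) :=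
          (htrans i j.1 k.1 j.2 hjk _).symm
        rw [heq]; exact hι1 _ _ _ _)
      (fun j p => norm_nonneg _)
    calc (⨆ p : K, ‖ιc i (f p - g p)‖)
        = ⨆ p : K, ⨅ j : {j // i ≤ j}, ‖ι i j.1 j.2 (f p - g p)‖ := by
          congr 1; funext p; exact hnorm i (f p - g p)
      _ = ⨅ j : {j // i ≤ j}, ⨆ p : K, ‖ι i j.1 j.2 (f p - g p)‖ := key.symm


theorem aux_part2
    {𝕜 : Type*} [RCLike 𝕜]
    {V : Type*} [NormedAddCommGroup V] [NormedSpace 𝕜 V] [CompleteSpace V]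
    (K : Set V) (hKcpt : IsCompact K) (hKacvx : IsAbsolutelyConvex 𝕜 K)
    (D : ℕ) (hD : 0 < D)
    {I : Type*} [Preorder I] [IsDirected I (· ≤ ·)] [Nonempty I]
    {E : I → Type*} [∀ i, NormedAddCommGroup (E i)] [∀ i, NormedSpace 𝕜 (E i)]
    [∀ i, CompleteSpace (E i)]
    {W : Type*} [NormedAddCommGroup W] [NormedSpace 𝕜 W] [CompleteSpace W]
    (ι : ∀ i j, i ≤ j → (E i →L[𝕜] E j))
    (ιc : ∀ i, E i →L[𝕜] W)
    (hι1 : ∀ i j (h : i ≤ j) (x : E i), ‖ι i j h x‖ ≤ ‖x‖)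
    (hιc1 : ∀ i (x : E i), ‖ιc i x‖ ≤ ‖x‖)
    (hcomp : ∀ i j (h : i ≤ j) (x : E i), ιc j (ι i j h x) = ιc i x)
    (htrans : ∀ i j k (hij : i ≤ j) (hjk : j ≤ k) (x : E i),
      ι j k hjk (ι i j hij x) = ι i k (hij.trans hjk) x)
    (hdense : Dense (⋃ i, Set.range (ιc i)))
    (hnorm : ∀ i (x : E i), ‖ιc i x‖ = ⨅ j : {j // i ≤ j}, ‖ι i j.1 j.2 x‖)
    (hK : Nonempty K) :
    (∀ (φ : K → W),
      IsAbsAffineOn 𝕜 K φ → (∀ p q : K, ‖φ p - φ q‖ ≤ ‖(p : V) - (q : V)‖) →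
      Module.rank 𝕜 (Submodule.span 𝕜 (Set.range φ)) ≤ (D : Cardinal) →
      ∀ ε > 0,
      ∃ (i : I) (ψ : K → E i),
        IsAbsAffineOn 𝕜 K ψ ∧ (∀ p q : K, ‖ψ p - ψ q‖ ≤ ‖(p : V) - (q : V)‖) ∧
        Module.rank 𝕜 (Submodule.span 𝕜 (Set.range ψ)) ≤ (D : Cardinal) ∧
        (⨆ p : K, ‖φ p - ιc i (ψ p)‖) ≤ ε) := by
  intro φ hφaff hφ1 hφrank ε hε
  classical
  haveI : CompactSpace K := isCompact_iff_compactSpace.mp hKcpt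
  -- continuity of φ
  have hφc : Continuous φ := by
    refine (LipschitzWith.of_dist_le_mul (K := 1) (fun p q => ?_)).continuous
    rw [dist_eq_norm, Subtype.dist_eq, dist_eq_norm]; simpa using hφ1 p q
  -- bound M
  haveI : Nonempty K := hK
  have p₀ : K := Classical.arbitrary K
  have hbdd : BddAbove (Set.range fun p : K => ‖φ p‖) :=
    (isCompact_range hφc.norm).bddAbove
  set M : ℝ := ⨆ p : K, ‖φ p‖ with hM
  have hMle : ∀ p : K, ‖φ p‖ ≤ M := fun p => le_ciSup hbdd p
  have hM0 : 0 ≤ M := le_trans (norm_nonneg _) (hMle p₀)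
  -- the span F
  set F := Submodule.span 𝕜 (Set.range φ) with hF
  haveI hFfd : FiniteDimensional 𝕜 F :=
    Module.rank_lt_aleph0_iff.mp (lt_of_le_of_lt hφrank (Cardinal.nat_lt_aleph0 D))
  -- basis from the range
  obtain ⟨t, hts, htsp, htli⟩ := exists_linearIndependent 𝕜 (Set.range φ)
  have hbeq : Submodule.span 𝕜 (Set.range ((↑) : t → W)) = F := by
    rw [Subtype.range_coe]; exact htsp
  let b : Module.Basis t 𝕜 F := (Module.Basis.span htli).map (LinearEquiv.ofEq _ _ hbeq)
  haveI : Fintype t := FiniteDimensional.fintypeBasisIndex b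
  have hbcoe : ∀ y : t, ((b y : F) : W) = (y : W) := by
    intro y
    simp only [b, Module.Basis.map_apply]
    rw [LinearEquiv.coe_ofEq_apply]
    exact congrArg Subtype.val (Module.Basis.span_apply htli y)
  -- coordinate functionals
  let cy : t → (F →L[𝕜] 𝕜) := fun y => LinearMap.toContinuousLinearMap (b.coord y)
  set C : ℝ := ∑ y : t, ‖cy y‖ with hC
  have hC0 : 0 ≤ C := Finset.sum_nonneg fun y _ => ContinuousLinearMap.opNorm_nonneg _
  -- choice of δ
  set δ : ℝ := min 1 (ε / ((C + 1) * (C + 2) * (M + 1))) with hδdef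
  have hden : 0 < (C + 1) * (C + 2) * (M + 1) := by positivity
  have hδ0 : 0 < δ := lt_min one_pos (div_pos hε hden)
  have hδ1 : δ ≤ 1 := min_le_left _ _
  have hδε : δ * ((C + 1) * (C + 2) * (M + 1)) ≤ ε := by
    calc δ * ((C + 1) * (C + 2) * (M + 1))
        ≤ (ε / ((C + 1) * (C + 2) * (M + 1))) * ((C + 1) * (C + 2) * (M + 1)) := by
          apply mul_le_mul_of_nonneg_right (min_le_right _ _) hden.le
      _ = ε := div_mul_cancel₀ ε hden.ne'
  -- approximate the basis vectors
  have happrox : ∀ y : t, ∃ (i : I) (x : E i), ‖ιc i x - (y : W)‖ < δ := by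
    intro y
    obtain ⟨z, hz1, hz2⟩ := Metric.dense_iff.mp hdense (y : W) δ hδ0
    obtain ⟨_, ⟨i, rfl⟩, x, rfl⟩ := hz2
    refine ⟨i, x, ?_⟩
    rw [← dist_eq_norm]
    exact Metric.mem_ball.mp hz1
  choose iy xy hxy using happrox
  obtain ⟨i₀, hi₀⟩ := Finset.exists_le (Finset.univ.image iy)
  have hiy : ∀ y : t, iy y ≤ i₀ := fun y =>
    hi₀ (iy y) (Finset.mem_image_of_mem iy (Finset.mem_univ y))
  set zy : t → E i₀ := fun y => ι (iy y) i₀ (hiy y) (xy y) with hzy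
  have hzy' : ∀ y : t, ‖ιc i₀ (zy y) - (y : W)‖ < δ := by
    intro y
    have h : ιc i₀ (zy y) = ιc (iy y) (xy y) := hcomp _ _ _ _
    rw [h]; exact hxy y
  -- the linear map T
  set T : F →ₗ[𝕜] E i₀ := b.constr 𝕜 zy with hT
  set Tc : F →L[𝕜] E i₀ := LinearMap.toContinuousLinearMap T with hTc
  have hTb : ∀ y : t, Tc (b y) = zy y := fun y => b.constr_basis 𝕜 zy y
  -- key error estimate
  set Derr : F →L[𝕜] W := (ιc i₀).comp Tc - Submodule.subtypeL F with hDerr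
  have hDx : ∀ x : F, Derr x = ιc i₀ (Tc x) - (x : W) := fun x => rfl
  have hDb : ∀ y : t, Derr (b y) = ιc i₀ (zy y) - (y : W) := by
    intro y
    rw [hDx, hTb, hbcoe]
  have h1 : ∀ x : F, Derr x = ∑ y : t, b.repr x y • (ιc i₀ (zy y) - (y : W)) := by
    intro x
    conv_lhs => rw [← b.sum_repr x]
    rw [map_sum]
    simp only [map_smul, hDb]
  have key : ∀ x : F, ‖ιc i₀ (Tc x) - (x : W)‖ ≤ δ * C * ‖x‖ := by
    intro x
    rw [← hDx, h1]
    calc ‖∑ y : t, b.repr x y • (ιc i₀ (zy y) - (y : W))‖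
        ≤ ∑ y : t, ‖b.repr x y • (ιc i₀ (zy y) - (y : W))‖ := norm_sum_le _ _
      _ ≤ ∑ y : t, ‖cy y‖ * ‖x‖ * δ := by
          refine Finset.sum_le_sum fun y _ => ?_
          rw [norm_smul]
          have h2 : ‖b.repr x y‖ ≤ ‖cy y‖ * ‖x‖ := (cy y).le_opNorm x
          exact mul_le_mul h2 (hzy' y).le (norm_nonneg _)
            (mul_nonneg (ContinuousLinearMap.opNorm_nonneg _) (norm_nonneg _))
      _ = δ * C * ‖x‖ := by rw [← Finset.sum_mul, ← Finset.sum_mul]; ring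
  have hnormcoe : ∀ x : F, ‖(x : W)‖ = ‖x‖ := fun x => rfl
  -- norm bound for ιc ∘ Tc
  have key2 : ∀ x : F, ‖ιc i₀ (Tc x)‖ ≤ (1 + δ * C) * ‖x‖ := by
    intro x
    calc ‖ιc i₀ (Tc x)‖ = ‖(ιc i₀ (Tc x) - (x : W)) + (x : W)‖ := by
          rw [sub_add_cancel]
      _ ≤ ‖ιc i₀ (Tc x) - (x : W)‖ + ‖(x : W)‖ := norm_add_le _ _
      _ ≤ δ * C * ‖x‖ + ‖x‖ := by
          rw [hnormcoe x]
          exact add_le_add_left (key x) _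
      _ = (1 + δ * C) * ‖x‖ := by ring
  -- Dini on the closed unit ball of F
  haveI : Nonempty {j // i₀ ≤ j} := ⟨⟨i₀, le_rfl⟩⟩
  haveI : IsDirected {j // i₀ ≤ j} (· ≤ ·) := ⟨fun a c => by
    obtain ⟨l, h1, h2⟩ := directed_of (· ≤ ·) a.1 c.1
    exact ⟨⟨l, a.2.trans h1⟩, h1, h2⟩⟩
  set B : Set F := Metric.closedBall 0 1 with hB
  haveI : CompactSpace B := isCompact_iff_compactSpace.mp (isCompact_closedBall 0 1)
  haveI : Nonempty B := ⟨⟨0, Metric.mem_closedBall_self zero_le_one⟩⟩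
  have hdini := dini_swap (J := {j // i₀ ≤ j}) (X := B)
    (fun j x => ‖ι i₀ j.1 j.2 (Tc x)‖)
    (fun j => ((ι i₀ j.1 j.2).continuous.comp
      (Tc.continuous.comp continuous_subtype_val)).norm)
    (fun j k hjk x => by
      show ‖ι i₀ k.1 k.2 (Tc x)‖ ≤ ‖ι i₀ j.1 j.2 (Tc x)‖
      have heq : ι i₀ k.1 k.2 (Tc (x : F))
          = ι j.1 k.1 hjk (ι i₀ j.1 j.2 (Tc (x : F))) :=
        (htrans i₀ j.1 k.1 j.2 hjk _).symm
      rw [heq]; exact hι1 _ _ _ _)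
    (fun j x => norm_nonneg _)
  have hsupinf : (⨆ x : B, ⨅ j : {j // i₀ ≤ j}, ‖ι i₀ j.1 j.2 (Tc x)‖) ≤ 1 + δ * C := by
    refine ciSup_le fun x => ?_
    have : (⨅ j : {j // i₀ ≤ j}, ‖ι i₀ j.1 j.2 (Tc (x : F))‖) = ‖ιc i₀ (Tc (x : F))‖ :=
      (hnorm i₀ (Tc (x : F))).symm
    rw [this]
    calc ‖ιc i₀ (Tc (x : F))‖ ≤ (1 + δ * C) * ‖(x : F)‖ := key2 _
      _ ≤ (1 + δ * C) * 1 := by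
          apply mul_le_mul_of_nonneg_left _ (by positivity)
          simpa [← dist_zero_right] using Metric.mem_closedBall.mp x.2
      _ = 1 + δ * C := mul_one _
  set c : ℝ := 1 + δ * C + δ with hc
  have hc1 : 1 ≤ c := by
    have h0 : 0 ≤ δ * C := mul_nonneg hδ0.le hC0
    rw [hc]; linarith
  have hc0 : 0 < c := lt_of_lt_of_le one_pos hc1
  have hlt : (⨅ j : {j // i₀ ≤ j}, ⨆ x : B, ‖ι i₀ j.1 j.2 (Tc x)‖) < c := by
    rw [hdini]
    exact lt_of_le_of_lt hsupinf (by rw [hc]; exact lt_add_of_pos_right _ hδ0)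
  obtain ⟨j₁, hj₁⟩ := exists_lt_of_ciInf_lt hlt
  have hj₁' : ∀ x : B, ‖ι i₀ j₁.1 j₁.2 (Tc x)‖ ≤ c := by
    intro x
    refine le_trans (le_ciSup (f := fun x : B => ‖ι i₀ j₁.1 j₁.2 (Tc (x : F))‖) ?_ x) hj₁.le
    exact (isCompact_range ((ι i₀ j₁.1 j₁.2).continuous.comp
      (Tc.continuous.comp continuous_subtype_val)).norm).bddAbove
  -- global operator bound
  have hglob : ∀ x : F, ‖ι i₀ j₁.1 j₁.2 (Tc x)‖ ≤ c * ‖x‖ := by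
    intro x
    rcases eq_or_ne x 0 with rfl | hx0
    · simp
    · have hxn : (0 : ℝ) < ‖x‖ := norm_pos_iff.mpr hx0
      set u : F := ((‖x‖⁻¹ : ℝ) : 𝕜) • x with hu
      have hun : ‖u‖ = 1 := by
        rw [hu, norm_smul, RCLike.norm_ofReal, abs_of_pos (inv_pos.mpr hxn)]
        exact inv_mul_cancel₀ hxn.ne'
      have huB : u ∈ B := by
        rw [hB, Metric.mem_closedBall, dist_zero_right, hun]
      have := hj₁' ⟨u, huB⟩
      have heq : ι i₀ j₁.1 j₁.2 (Tc u) = ((‖x‖⁻¹ : ℝ) : 𝕜) • ι i₀ j₁.1 j₁.2 (Tc x) := by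
        rw [hu, map_smul, map_smul]
      rw [heq, norm_smul, RCLike.norm_ofReal, abs_of_pos (inv_pos.mpr hxn)] at this
      calc ‖ι i₀ j₁.1 j₁.2 (Tc x)‖ = ‖x‖ * (‖x‖⁻¹ * ‖ι i₀ j₁.1 j₁.2 (Tc x)‖) := by
            rw [← mul_assoc, mul_inv_cancel₀ hxn.ne', one_mul]
        _ ≤ ‖x‖ * c := mul_le_mul_of_nonneg_left this hxn.le
        _ = c * ‖x‖ := mul_comm _ _
  -- definition of ψ
  have hmem : ∀ p : K, φ p ∈ F := fun p => Submodule.subset_span (Set.mem_range_self p)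
  set φF : K → F := fun p => ⟨φ p, hmem p⟩ with hφF
  set S : F →L[𝕜] E j₁.1 := ((c⁻¹ : ℝ) : 𝕜) • ((ι i₀ j₁.1 j₁.2).comp Tc) with hS
  set ψ : K → E j₁.1 := fun p => S (φF p) with hψ
  have hSle : ∀ x : F, ‖S x‖ ≤ ‖x‖ := by
    intro x
    rw [hS]
    calc ‖(((c⁻¹ : ℝ) : 𝕜) • ((ι i₀ j₁.1 j₁.2).comp Tc)) x‖
        = c⁻¹ * ‖ι i₀ j₁.1 j₁.2 (Tc x)‖ := by
          rw [ContinuousLinearMap.smul_apply, norm_smul, RCLike.norm_ofReal,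
            abs_of_pos (inv_pos.mpr hc0)]
          rfl
      _ ≤ c⁻¹ * (c * ‖x‖) := mul_le_mul_of_nonneg_left (hglob x) (inv_pos.mpr hc0).le
      _ = ‖x‖ := by field_simp
  have hφFsub : ∀ p q : K, ‖φF p - φF q‖ = ‖φ p - φ q‖ := fun p q => rfl
  refine ⟨j₁.1, ψ, ?_, ?_, ?_, ?_⟩
  · -- absolutely affine
    intro a b' x y hab h
    have h5 := hφaff a b' x y hab h
    have h6 : φF ⟨a • (x : V) + b' • (y : V), h⟩ = a • φF x + b' • φF y := by
      apply Subtype.ext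
      simpa using h5
    show S (φF ⟨a • (x : V) + b' • (y : V), h⟩) = a • S (φF x) + b' • S (φF y)
    rw [h6, map_add, map_smul, map_smul]
  · -- nonexpansive
    intro p q
    show ‖S (φF p) - S (φF q)‖ ≤ ‖(p : V) - (q : V)‖
    rw [← map_sub]
    calc ‖S (φF p - φF q)‖ ≤ ‖φF p - φF q‖ := hSle _
      _ = ‖φ p - φ q‖ := hφFsub p q
      _ ≤ ‖(p : V) - (q : V)‖ := hφ1 p q
  · -- rank bound
    have hsub : Submodule.span 𝕜 (Set.range ψ) ≤ LinearMap.range (S : F →ₗ[𝕜] E j₁.1) := by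
      rw [Submodule.span_le]
      rintro _ ⟨p, rfl⟩
      exact ⟨φF p, rfl⟩
    have hr1 : Module.rank 𝕜 (Submodule.span 𝕜 (Set.range ψ))
        ≤ Module.rank 𝕜 (LinearMap.range (S : F →ₗ[𝕜] E j₁.1)) :=
      Submodule.rank_mono hsub
    have hr2 := lift_rank_range_le (S : F →ₗ[𝕜] E j₁.1)
    refine hr1.trans ?_
    have h16 := hr2.trans (Cardinal.lift_le.mpr hφrank)
    rw [Cardinal.lift_natCast] at h16
    rw [← Cardinal.lift_le, Cardinal.lift_natCast]
    exact h16
  · -- approximation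
    refine ciSup_le fun p => ?_
    have hιψ : ιc j₁.1 (ψ p) = ((c⁻¹ : ℝ) : 𝕜) • ιc i₀ (Tc (φF p)) := by
      show ιc j₁.1 (S (φF p)) = _
      rw [hS, ContinuousLinearMap.smul_apply, map_smul]
      congr 1
      exact hcomp i₀ j₁.1 j₁.2 _
    have hxn : ‖φF p‖ ≤ M := by rw [show ‖φF p‖ = ‖φ p‖ from rfl]; exact hMle p
    have e1 : ‖φ p - ιc i₀ (Tc (φF p))‖ ≤ δ * C * M := by
      have := key (φF p)
      have h7 : ((φF p : F) : W) = φ p := rfl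
      rw [h7] at this
      calc ‖φ p - ιc i₀ (Tc (φF p))‖ = ‖ιc i₀ (Tc (φF p)) - φ p‖ := norm_sub_rev _ _
        _ ≤ δ * C * ‖φF p‖ := this
        _ ≤ δ * C * M := mul_le_mul_of_nonneg_left hxn (by positivity)
    have e2 : ‖ιc i₀ (Tc (φF p)) - ιc j₁.1 (ψ p)‖ ≤ (δ * C + δ) * ((1 + δ * C) * M) := by
      rw [hιψ]
      have h8 : ιc i₀ (Tc (φF p)) - ((c⁻¹ : ℝ) : 𝕜) • ιc i₀ (Tc (φF p))
          = ((1 - c⁻¹ : ℝ) : 𝕜) • ιc i₀ (Tc (φF p)) := by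
        rw [RCLike.ofReal_sub, sub_smul]
        simp
      rw [h8, norm_smul, RCLike.norm_ofReal]
      have h9 : |1 - c⁻¹| = 1 - c⁻¹ := abs_of_nonneg (by
        have : c⁻¹ ≤ 1 := by
          rw [inv_le_one_iff₀]; right; exact hc1
        linarith)
      rw [h9]
      have h10 : 1 - c⁻¹ ≤ δ * C + δ := by
        have : c⁻¹ ≥ 1 / c := by rw [one_div]
        have h11 : 1 - c⁻¹ = (c - 1) / c := by field_simp
        rw [h11, hc]
        have h12 : (1 + δ * C + δ - 1) = δ * C + δ := by ring
        rw [h12]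
        apply div_le_of_le_mul₀ hc0.le (by positivity)
        nlinarith [mul_nonneg hδ0.le hC0]
      have h13 : ‖ιc i₀ (Tc (φF p))‖ ≤ (1 + δ * C) * M := by
        calc ‖ιc i₀ (Tc (φF p))‖ ≤ (1 + δ * C) * ‖φF p‖ := key2 _
          _ ≤ (1 + δ * C) * M := mul_le_mul_of_nonneg_left hxn (by positivity)
      have h14 : (0 : ℝ) ≤ δ * C + δ := by positivity
      calc (1 - c⁻¹) * ‖ιc i₀ (Tc (φF p))‖
          ≤ (δ * C + δ) * ‖ιc i₀ (Tc (φF p))‖ :=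
            mul_le_mul_of_nonneg_right h10 (norm_nonneg _)
        _ ≤ (δ * C + δ) * ((1 + δ * C) * M) :=
            mul_le_mul_of_nonneg_left h13 h14
    calc ‖φ p - ιc j₁.1 (ψ p)‖
        ≤ ‖φ p - ιc i₀ (Tc (φF p))‖ + ‖ιc i₀ (Tc (φF p)) - ιc j₁.1 (ψ p)‖ :=
          norm_sub_le_norm_sub_add_norm_sub _ _ _
      _ ≤ δ * C * M + (δ * C + δ) * ((1 + δ * C) * M) := add_le_add e1 e2
      _ ≤ δ * ((C + 1) * (C + 2) * (M + 1)) := arith_bound hδ0 hδ1 hC0 hM0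
      _ ≤ ε := hδε


/-- For a compact, convex, balanced (i.e. absolutely convex) subset
`K` of a Banach space over `𝕜` (with the induced metric) and a positive integer `D`,
the functor of absolutely affine nonexpansive maps with image spanning at most `D`
dimensions, from Banach spaces over `𝕜` with linear contractions to complete metric
spaces (supremum distance), preserves filtered colimits: (i) the canonical
comparison map is isometric on absolutely affine nonexpansive maps, and (ii) every
absolutely affine nonexpansive `φ : K → E` whose image spans a subspace of dimension
at most `D` is uniformly approximated by such maps into the stages `E i`. -/
theorem stmt16
    {𝕜 : Type*} [RCLike 𝕜]
    {V : Type*} [NormedAddCommGroup V] [NormedSpace 𝕜 V] [CompleteSpace V]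
    (K : Set V) (hKcpt : IsCompact K) (hKacvx : IsAbsolutelyConvex 𝕜 K)
    (D : ℕ) (hD : 0 < D)
    {I : Type*} [Preorder I] [IsDirected I (· ≤ ·)] [Nonempty I]
    {E : I → Type*} [∀ i, NormedAddCommGroup (E i)] [∀ i, NormedSpace 𝕜 (E i)]
    [∀ i, CompleteSpace (E i)]
    {W : Type*} [NormedAddCommGroup W] [NormedSpace 𝕜 W] [CompleteSpace W]
    (ι : ∀ i j, i ≤ j → (E i →L[𝕜] E j))
    (ιc : ∀ i, E i →L[𝕜] W)
    (hι1 : ∀ i j (h : i ≤ j) (x : E i), ‖ι i j h x‖ ≤ ‖x‖)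
    (hιc1 : ∀ i (x : E i), ‖ιc i x‖ ≤ ‖x‖)
    (hcomp : ∀ i j (h : i ≤ j) (x : E i), ιc j (ι i j h x) = ιc i x)
    (htrans : ∀ i j k (hij : i ≤ j) (hjk : j ≤ k) (x : E i),
      ι j k hjk (ι i j hij x) = ι i k (hij.trans hjk) x)
    (hid : ∀ i (x : E i), ι i i le_rfl x = x)
    (hdense : Dense (⋃ i, Set.range (ιc i)))
    (hnorm : ∀ i (x : E i), ‖ιc i x‖ = ⨅ j : {j // i ≤ j}, ‖ι i j.1 j.2 x‖) :
    (∀ i (f g : K → E i),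
      IsAbsAffineOn 𝕜 K f → (∀ p q : K, ‖f p - f q‖ ≤ ‖(p : V) - (q : V)‖) →
      IsAbsAffineOn 𝕜 K g → (∀ p q : K, ‖g p - g q‖ ≤ ‖(p : V) - (q : V)‖) →
      (⨆ p : K, ‖ιc i (f p) - ιc i (g p)‖)
        = ⨅ j : {j // i ≤ j}, ⨆ p : K, ‖ι i j.1 j.2 (f p) - ι i j.1 j.2 (g p)‖)
    ∧
    (∀ (φ : K → W),
      IsAbsAffineOn 𝕜 K φ → (∀ p q : K, ‖φ p - φ q‖ ≤ ‖(p : V) - (q : V)‖) →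
      Module.rank 𝕜 (Submodule.span 𝕜 (Set.range φ)) ≤ (D : Cardinal) →
      ∀ ε > 0,
      ∃ (i : I) (ψ : K → E i),
        IsAbsAffineOn 𝕜 K ψ ∧ (∀ p q : K, ‖ψ p - ψ q‖ ≤ ‖(p : V) - (q : V)‖) ∧
        Module.rank 𝕜 (Submodule.span 𝕜 (Set.range ψ)) ≤ (D : Cardinal) ∧
        (⨆ p : K, ‖φ p - ιc i (ψ p)‖) ≤ ε) := by
  constructor
  · intro i f g _ hf1 _ hg1
    exact aux_part1 K hKcpt ι ιc hι1 htrans hnorm i f g hf1 hg1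
  · rcases isEmpty_or_nonempty K with hK | hK
    · intro φ _ _ _ ε hε
      refine ⟨Classical.arbitrary I, fun _ => 0, ?_, ?_, ?_, ?_⟩
      · intro a b x y hab h
        exact (IsEmpty.false x).elim
      · intro p q
        exact (IsEmpty.false p).elim
      · rw [Set.range_eq_empty, Submodule.span_empty]
        simp only [rank_bot]
        exact_mod_cast Nat.zero_le D
      · rw [Real.iSup_of_isEmpty]
        exact hε.le
    · exact aux_part2 K hKcpt hKacvx D hD ι ιc hι1 hιc1 hcomp htrans hdense hnorm hK
end

section
/- Let G be a compact Hausdorff topological group, and let (A_i)_{i ∈ I}, ι_{ji}, A, ι_i be a filtered colimit presentation of unital Banach algebras. Then for every representation φ : G → A^× and all ε > 0 and δ > 0 there exist i ∈ I and a continuous map ψ : G → A_i (not necessarily multiplicative) such that sup_{g ∈ G} ‖φ(g) − ι_i(ψ(g))‖ ≤ ε and sup_{s,t ∈ G} ‖ψ(st) − ψ(s)ψ(t)‖ < δ; that is, φ can be uniformly approximated through the colimit by continuous maps into the A_i that are approximately multiplicative. -/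
/-- For a compact Hausdorff topological group `G` and a filtered
colimit presentation of unital Banach algebras, every representation `φ : G → A^×`
into the colimit can, for all `ε, δ > 0`, be uniformly `ε`-approximated through the
colimit by a continuous (not necessarily multiplicative) map `ψ : G → A i` that is
`δ`-approximately multiplicative: `sup_{s,t} ‖ψ(st) − ψ(s)ψ(t)‖ < δ`. -/
theorem stmt17
    {G : Type*} [Group G] [TopologicalSpace G] [IsTopologicalGroup G]
    [CompactSpace G] [T2Space G]
    {I : Type*} [Preorder I] [IsDirected I (· ≤ ·)] [Nonempty I]
    {A : I → Type*} [∀ i, NormedRing (A i)] [∀ i, NormOneClass (A i)]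
    [∀ i, NormedAlgebra ℝ (A i)] [∀ i, CompleteSpace (A i)]
    {B : Type*} [NormedRing B] [NormOneClass B] [NormedAlgebra ℝ B] [CompleteSpace B]
    (ι : ∀ i j, i ≤ j → (A i →ₐ[ℝ] A j))
    (ιc : ∀ i, A i →ₐ[ℝ] B)
    (hι1 : ∀ i j (h : i ≤ j) (x : A i), ‖ι i j h x‖ ≤ ‖x‖)
    (hιc1 : ∀ i (x : A i), ‖ιc i x‖ ≤ ‖x‖)
    (hcomp : ∀ i j (h : i ≤ j) (x : A i), ιc j (ι i j h x) = ιc i x)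
    (htrans : ∀ i j k (hij : i ≤ j) (hjk : j ≤ k) (x : A i),
      ι j k hjk (ι i j hij x) = ι i k (hij.trans hjk) x)
    (hid : ∀ i (x : A i), ι i i le_rfl x = x)
    (hdense : Dense (⋃ i, Set.range (ιc i)))
    (hnorm : ∀ i (x : A i), ‖ιc i x‖ = ⨅ j : {j // i ≤ j}, ‖ι i j.1 j.2 x‖)
    (φ : G →* Bˣ) (hφ : Continuous (fun g => ((φ g : Bˣ) : B)))
    (ε δ : ℝ) (hε : 0 < ε) (hδ : 0 < δ) :
    ∃ (i : I) (ψ : G → A i),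
      Continuous ψ ∧
      (⨆ g : G, ‖((φ g : Bˣ) : B) - ιc i (ψ g)‖) ≤ ε ∧
      (⨆ st : G × G, ‖ψ (st.1 * st.2) - ψ st.1 * ψ st.2‖) < δ := by
  classical
  set Φ : G → B := fun g => ((φ g : Bˣ) : B) with hΦdef
  have hΦ : Continuous Φ := hφ
  have hΦmul : ∀ s t : G, Φ (s * t) = Φ s * Φ t := by
    intro s t; simp [hΦdef]
  obtain ⟨M0, hM0⟩ := isCompact_univ.exists_bound_of_continuousOn hΦ.continuousOn
  set M : ℝ := max M0 1 with hM
  have hM1 : (1:ℝ) ≤ M := le_max_right _ _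
  have hMpos : (0:ℝ) < M := lt_of_lt_of_le one_pos hM1
  have hMb : ∀ g : G, ‖Φ g‖ ≤ M := fun g => (hM0 g trivial).trans (le_max_left _ _)
  set η : ℝ := min (min (ε/2) 1) (δ/(32*M)) with hηdef
  have hηpos : 0 < η := by
    apply lt_min (lt_min (by linarith) one_pos)
    positivity
  have hηε : 2*η ≤ ε := by
    have h2 : η ≤ ε/2 := (min_le_left _ _).trans (min_le_left _ _)
    linarith
  have hη1 : η ≤ 1 := (min_le_left _ _).trans (min_le_right _ _)
  have hηδ : η ≤ δ/(32*M) := min_le_right _ _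
  -- finite cover
  set V : G → Set G := fun g => Φ ⁻¹' Metric.ball (Φ g) η with hVdef
  have hVopen : ∀ g, IsOpen (V g) := fun g => Metric.isOpen_ball.preimage hΦ
  have hVmem : ∀ g, g ∈ V g := fun g => by
    simp [hVdef, Metric.mem_ball, hηpos]
  obtain ⟨T, hT⟩ := isCompact_univ.elim_finite_subcover V hVopen
    (fun g _ => Set.mem_iUnion.2 ⟨g, hVmem g⟩)
  -- partition of unity
  obtain ⟨f, hf⟩ := PartitionOfUnity.exists_isSubordinate (s := (Set.univ : Set G))
    isClosed_univ (fun k : ↑T => V (k : G)) (fun k => hVopen _)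
    (by
      intro g _
      obtain ⟨k, hk⟩ := Set.mem_iUnion₂.1 (hT (Set.mem_univ g))
      exact Set.mem_iUnion.2 ⟨⟨k, hk.1⟩, hk.2⟩)
  have hsum1 : ∀ g : G, ∑ k : ↑T, f k g = 1 := by
    intro g
    have := f.sum_eq_one (Set.mem_univ g)
    rwa [finsum_eq_sum_of_fintype] at this
  have hfnn : ∀ (k : ↑T) (g : G), 0 ≤ f k g := fun k g => f.nonneg k g
  -- pick approximants by density
  have hpick : ∀ k : ↑T, ∃ (i : I) (a : A i), ‖Φ (k : G) - ιc i a‖ < η := by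
    intro k
    have h1 : Φ (k : G) ∈ closure (⋃ i, Set.range (ιc i)) := hdense _
    obtain ⟨y, hy, hyd⟩ := Metric.mem_closure_iff.1 h1 η hηpos
    obtain ⟨i, a, rfl⟩ : ∃ i a, y = ιc i a := by
      obtain ⟨i, hi⟩ := Set.mem_iUnion.1 hy
      obtain ⟨a, ha⟩ := hi
      exact ⟨i, a, ha.symm⟩
    exact ⟨i, a, by rwa [dist_eq_norm] at hyd⟩
  choose idx a' ha' using hpick
  obtain ⟨i0, hi0⟩ := (Finset.univ.image idx).exists_le
  have hub : ∀ k : ↑T, idx k ≤ i0 := fun k => hi0 _ (Finset.mem_image_of_mem idx (Finset.mem_univ k))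
  set a : ↑T → A i0 := fun k => ι (idx k) i0 (hub k) (a' k) with hadef
  have haB : ∀ k : ↑T, ‖Φ (k : G) - ιc i0 (a k)‖ < η := by
    intro k; rw [hadef]; simp only []; rw [hcomp]; exact ha' k
  -- closeness on supports
  have hclose : ∀ (k : ↑T) (g : G), f k g ≠ 0 → ‖Φ g - ιc i0 (a k)‖ < 2*η := by
    intro k g hg
    have hgV : g ∈ V (k : G) := hf k (subset_closure (by simpa using hg))
    have h1 : ‖Φ g - Φ (k : G)‖ < η := by
      have := hgV
      rw [hVdef] at this
      simpa [Metric.mem_ball, dist_eq_norm] using this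
    calc ‖Φ g - ιc i0 (a k)‖ ≤ ‖Φ g - Φ (k : G)‖ + ‖Φ (k : G) - ιc i0 (a k)‖ :=
          norm_sub_le_norm_sub_add_norm_sub _ _ _
      _ < η + η := add_lt_add h1 (haB k)
      _ = 2*η := by ring
  have haMb : ∀ k : ↑T, ‖ιc i0 (a k)‖ ≤ 3*M := by
    intro k
    have := (haB k).le
    have h2 : ‖ιc i0 (a k)‖ ≤ ‖Φ (k : G)‖ + ‖Φ (k : G) - ιc i0 (a k)‖ := by
      have := norm_sub_le (Φ (k:G)) (ιc i0 (a k))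
      have h3 := norm_sub_norm_le (Φ (k:G)) (ιc i0 (a k))
      linarith [abs_norm_sub_norm_le (Φ (k:G)) (ιc i0 (a k)), abs_le.1 (abs_norm_sub_norm_le (Φ (k:G)) (ιc i0 (a k)))]
    have := hMb (k : G)
    nlinarith [hηpos.le, hη1, hM1]
  -- the set of relevant triples
  set S : Set (↑T × ↑T × ↑T) :=
    {p | ∃ s t : G, f p.1 (s*t) * (f p.2.1 s * f p.2.2 t) ≠ 0} with hSdef
  set x : ↑T × ↑T × ↑T → A i0 := fun p => a p.1 - a p.2.1 * a p.2.2 with hxdef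
  have hSx : ∀ p ∈ S, ‖ιc i0 (x p)‖ < δ/2 := by
    rintro ⟨k, l, m⟩ ⟨s, t, hst⟩
    have h1 : f k (s*t) ≠ 0 := fun h => hst (by simp [h])
    have h2 : f l s ≠ 0 := fun h => hst (by simp [h])
    have h3 : f m t ≠ 0 := fun h => hst (by simp [h])
    have hk := hclose k (s*t) h1
    have hl := hclose l s h2
    have hm := hclose m t h3
    have hmul : Φ (s*t) = Φ s * Φ t := hΦmul s t
    have key : ‖ιc i0 (x (k,l,m))‖ ≤ ‖ιc i0 (a k) - Φ (s*t)‖ +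
        (‖Φ s‖ * ‖Φ t - ιc i0 (a m)‖ + ‖Φ s - ιc i0 (a l)‖ * ‖ιc i0 (a m)‖) := by
      have e1 : ιc i0 (x (k,l,m)) = (ιc i0 (a k) - Φ (s*t)) +
          (Φ s * (Φ t - ιc i0 (a m)) + (Φ s - ιc i0 (a l)) * ιc i0 (a m)) := by
        rw [hxdef]; simp only [map_sub, map_mul, hmul]; noncomm_ring
      rw [e1]
      calc ‖_ + _‖ ≤ ‖ιc i0 (a k) - Φ (s*t)‖ + ‖Φ s * (Φ t - ιc i0 (a m)) + (Φ s - ιc i0 (a l)) * ιc i0 (a m)‖ := norm_add_le _ _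
        _ ≤ _ := by
            gcongr
            calc ‖_ + _‖ ≤ ‖Φ s * (Φ t - ιc i0 (a m))‖ + ‖(Φ s - ιc i0 (a l)) * ιc i0 (a m)‖ := norm_add_le _ _
              _ ≤ ‖Φ s‖ * ‖Φ t - ιc i0 (a m)‖ + ‖Φ s - ιc i0 (a l)‖ * ‖ιc i0 (a m)‖ := by
                  gcongr <;> exact norm_mul_le _ _
    have hknorm : ‖ιc i0 (a k) - Φ (s*t)‖ < 2*η := by rwa [norm_sub_rev]
    have hMs := hMb s
    have ham := haMb m
    have hηM : η ≤ δ/(32*M) := hηδ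
    have : ‖ιc i0 (x (k,l,m))‖ < 2*η + (M * (2*η) + (2*η) * (3*M)) := by
      calc ‖ιc i0 (x (k,l,m))‖ ≤ _ := key
        _ < 2*η + (M * (2*η) + (2*η) * (3*M)) := by
            have hΦsnn : (0:ℝ) ≤ ‖Φ s‖ := norm_nonneg _
            have h5 : ‖Φ s‖ * ‖Φ t - ιc i0 (a m)‖ ≤ M * (2*η) := by
              apply mul_le_mul hMs hm.le (norm_nonneg _) hMpos.le
            have h6 : ‖Φ s - ιc i0 (a l)‖ * ‖ιc i0 (a m)‖ ≤ (2*η) * (3*M) := by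
              apply mul_le_mul hl.le ham (norm_nonneg _) (by linarith)
            linarith
    have hbound : 2*η + (M * (2*η) + (2*η) * (3*M)) ≤ δ/2 := by
      have : η * M ≤ δ/32 := by
        have h32 : (0:ℝ) < 32*M := by positivity
        calc η * M ≤ (δ/(32*M)) * M := by nlinarith
          _ = δ/32 := by field_simp
      nlinarith
    linarith
  -- choose indices killing the norms
  have hJ : ∀ p : ↑T × ↑T × ↑T, ∃ j, ∃ h : i0 ≤ j, p ∈ S → ‖ι i0 j h (x p)‖ < δ/2 := by
    intro p
    by_cases hp : p ∈ S
    · have h1 := hSx p hp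
      rw [hnorm] at h1
      haveI : Nonempty {j // i0 ≤ j} := ⟨⟨i0, le_rfl⟩⟩
      obtain ⟨⟨j, hj⟩, hjlt⟩ := exists_lt_of_ciInf_lt h1
      exact ⟨j, hj, fun _ => hjlt⟩
    · exact ⟨i0, le_rfl, fun h => absurd h hp⟩
  choose J hJ1 hJ2 using hJ
  obtain ⟨jf, hjf⟩ := (Finset.univ.image J).exists_le
  obtain ⟨j, hji0, hjJ⟩ : ∃ j, i0 ≤ j ∧ ∀ p, J p ≤ j := by
    obtain ⟨j, h1, h2⟩ := directed_of (· ≤ ·) i0 jf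
    exact ⟨j, h1, fun p => le_trans (hjf _ (Finset.mem_image_of_mem J (Finset.mem_univ p))) h2⟩
  have hxj : ∀ p ∈ S, ‖ι i0 j hji0 (x p)‖ ≤ δ/2 := by
    intro p hp
    have e : ι i0 j hji0 (x p) = ι (J p) j (hjJ p) (ι i0 (J p) (hJ1 p) (x p)) := by
      rw [htrans]
    rw [e]
    exact le_of_lt (lt_of_le_of_lt (hι1 _ _ _ _) (hJ2 p hp))
  -- the map
  set b : ↑T → A j := fun k => ι i0 j hji0 (a k) with hbdef
  set ψ : G → A j := fun g => ∑ k : ↑T, f k g • b k with hψdef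
  refine ⟨j, ψ, ?_, ?_, ?_⟩
  · exact continuous_finset_sum _ fun k _ => ((f k).continuous).smul continuous_const
  · -- approximation
    haveI : Nonempty G := ⟨1⟩
    apply ciSup_le
    intro g
    have e1 : ιc j (ψ g) = ∑ k : ↑T, f k g • ιc i0 (a k) := by
      rw [hψdef]
      simp only [map_sum, map_smul]
      congr 1; ext k; rw [hbdef]; simp only []; rw [hcomp]
    have e2 : Φ g - ιc j (ψ g) = ∑ k : ↑T, f k g • (Φ g - ιc i0 (a k)) := by
      rw [e1]
      have hg1 : Φ g = ∑ k : ↑T, f k g • Φ g := by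
        rw [← Finset.sum_smul, hsum1, one_smul]
      conv_lhs => rw [hg1]
      rw [← Finset.sum_sub_distrib]
      exact Finset.sum_congr rfl fun k _ => (smul_sub _ _ _).symm
    rw [e2]
    calc ‖∑ k : ↑T, f k g • (Φ g - ιc i0 (a k))‖
        ≤ ∑ k : ↑T, ‖f k g • (Φ g - ιc i0 (a k))‖ := norm_sum_le _ _
      _ ≤ ∑ k : ↑T, f k g * (2*η) := by
          apply Finset.sum_le_sum
          intro k _
          rw [norm_smul, Real.norm_eq_abs, abs_of_nonneg (hfnn k g)]
          by_cases h : f k g = 0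
          · simp [h]
          · exact mul_le_mul_of_nonneg_left (hclose k g h).le (hfnn k g)
      _ = 2*η := by rw [← Finset.sum_mul, hsum1, one_mul]
      _ ≤ ε := hηε
  · -- approximate multiplicativity
    haveI : Nonempty (G × G) := ⟨(1,1)⟩
    have hbd : ∀ st : G × G, ‖ψ (st.1 * st.2) - ψ st.1 * ψ st.2‖ ≤ δ/2 := by
      rintro ⟨s, t⟩
      simp only []
      have hscal : ∀ k : ↑T, ∑ l : ↑T, ∑ m : ↑T, f k (s*t) * (f l s * f m t) = f k (s*t) := by
        intro k
        calc ∑ l : ↑T, ∑ m : ↑T, f k (s*t) * (f l s * f m t)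
            = f k (s*t) * ∑ l : ↑T, ∑ m : ↑T, f l s * f m t := by
              rw [Finset.mul_sum]
              exact Finset.sum_congr rfl fun l _ => (Finset.mul_sum _ _ _).symm
          _ = f k (s*t) * ((∑ l : ↑T, f l s) * (∑ m : ↑T, f m t)) := by
              rw [Finset.sum_mul_sum]
          _ = f k (s*t) := by rw [hsum1, hsum1, one_mul, mul_one]
      have hA : ∑ k : ↑T, ∑ l : ↑T, ∑ m : ↑T, (f k (s*t) * (f l s * f m t)) • b k
          = ψ (s*t) := by
        rw [hψdef]
        refine Finset.sum_congr rfl fun k _ => ?_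
        simp only [← Finset.sum_smul]
        rw [hscal k]
      have hB0 : ψ s * ψ t = ∑ l : ↑T, ∑ m : ↑T, (f l s * f m t) • (b l * b m) := by
        rw [hψdef]
        simp only []
        rw [Finset.sum_mul_sum]
        exact Finset.sum_congr rfl fun l _ => Finset.sum_congr rfl fun m _ =>
          smul_mul_smul_comm _ _ _ _
      have hB : ∑ k : ↑T, ∑ l : ↑T, ∑ m : ↑T, (f k (s*t) * (f l s * f m t)) • (b l * b m)
          = ψ s * ψ t := by
        rw [hB0]
        calc ∑ k : ↑T, ∑ l : ↑T, ∑ m : ↑T, (f k (s*t) * (f l s * f m t)) • (b l * b m)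
            = ∑ k : ↑T, f k (s*t) • ∑ l : ↑T, ∑ m : ↑T, (f l s * f m t) • (b l * b m) := by
              refine Finset.sum_congr rfl fun k _ => ?_
              rw [Finset.smul_sum]
              refine Finset.sum_congr rfl fun l _ => ?_
              rw [Finset.smul_sum]
              exact Finset.sum_congr rfl fun m _ => mul_smul _ _ _
          _ = (∑ k : ↑T, f k (s*t)) • ∑ l : ↑T, ∑ m : ↑T, (f l s * f m t) • (b l * b m) := by
              rw [Finset.sum_smul]
          _ = _ := by rw [hsum1, one_smul]
      have hD : ψ (s*t) - ψ s * ψ t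
          = ∑ k : ↑T, ∑ l : ↑T, ∑ m : ↑T,
              (f k (s*t) * (f l s * f m t)) • (b k - b l * b m) := by
        rw [← hA, ← hB, ← Finset.sum_sub_distrib]
        refine Finset.sum_congr rfl fun k _ => ?_
        rw [← Finset.sum_sub_distrib]
        refine Finset.sum_congr rfl fun l _ => ?_
        rw [← Finset.sum_sub_distrib]
        exact Finset.sum_congr rfl fun m _ => (smul_sub _ _ _).symm
      have key : ∀ k l m : ↑T, ‖(f k (s*t) * (f l s * f m t)) • (b k - b l * b m)‖
          ≤ (f k (s*t) * (f l s * f m t)) * (δ/2) := by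
        intro k l m
        have hnn : 0 ≤ f k (s*t) * (f l s * f m t) :=
          mul_nonneg (hfnn _ _) (mul_nonneg (hfnn _ _) (hfnn _ _))
        rw [norm_smul, Real.norm_eq_abs, abs_of_nonneg hnn]
        by_cases h : f k (s*t) * (f l s * f m t) = 0
        · simp [h]
        · refine mul_le_mul_of_nonneg_left ?_ hnn
          have e : b k - b l * b m = ι i0 j hji0 (x (k, l, m)) := by
            rw [hxdef, hbdef]
            simp only [map_sub, map_mul]
          rw [e]
          exact hxj _ ⟨s, t, h⟩
      have hfin : ‖ψ (s*t) - ψ s * ψ t‖ ≤ δ/2 := by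
        rw [hD]
        calc ‖∑ k : ↑T, ∑ l : ↑T, ∑ m : ↑T,
              (f k (s*t) * (f l s * f m t)) • (b k - b l * b m)‖
            ≤ ∑ k : ↑T, ∑ l : ↑T, ∑ m : ↑T, (f k (s*t) * (f l s * f m t)) * (δ/2) := by
              refine (norm_sum_le _ _).trans (Finset.sum_le_sum fun k _ => ?_)
              refine (norm_sum_le _ _).trans (Finset.sum_le_sum fun l _ => ?_)
              refine (norm_sum_le _ _).trans (Finset.sum_le_sum fun m _ => ?_)
              exact key k l m
          _ = δ/2 := by
              have e1 : ∀ k : ↑T, ∑ l : ↑T, ∑ m : ↑T,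
                  (f k (s*t) * (f l s * f m t)) * (δ/2)
                  = (∑ l : ↑T, ∑ m : ↑T, f k (s*t) * (f l s * f m t)) * (δ/2) := by
                intro k
                rw [Finset.sum_mul]
                exact Finset.sum_congr rfl fun l _ => (Finset.sum_mul _ _ _).symm
              simp only [e1, hscal]
              rw [← Finset.sum_mul, hsum1, one_mul]
      exact hfin
    calc (⨆ st : G × G, ‖ψ (st.1 * st.2) - ψ st.1 * ψ st.2‖) ≤ δ/2 := ciSup_le hbd
      _ < δ := by linarith
end
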